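/- Let S : [0, 2π] → ℝ be continuous with S(x) > 0 for all x, let x₀ ∈ (0, 2π), and suppose the left derivative and the right derivative of S at x₀ both exist (finite) and are unequal. Let p := S(x₀)·(cos x₀, sin x₀) and J := { S(θ)·(cos θ, sin θ) : θ ∈ [0, 2π] }. Then for every δ > 0, the set J ∩ closedBall(p, δ) is not a C¹ curve. -/

import Mathlib

open Set Metric Filter
open scoped ENNReal NNReal

noncomputable section

/-- The closed ε-neighbourhood of a set: the closure of the union of open ε-balls
centred at points of `E`. -/
def epsNbhd {X : Type*} [MetricSpace X] (E : Set X) (ε : ℝ) : Set X :=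
  closure (⋃ x ∈ E, Metric.ball x ε)

/-- `Unp E` is the set of points having a unique nearest point in (the closure of) `E`. -/
def unp {X : Type*} [MetricSpace X] (E : Set X) : Set X :=
  {z | ∃! y, y ∈ closure E ∧ dist z y = Metric.infDist z E}

/-- The local reach of `E` at `y`: the supremum of radii `r` such that the open ball
`B(y, r)` is contained in `Unp E`. -/
def reachAt {X : Type*} [MetricSpace X] (E : Set X) (y : X) : ℝ≥0∞ :=
  ⨆ (r : ℝ≥0∞) (_ : EMetric.ball y r ⊆ unp E), r

/-- The reach of a set `E` (defined via the closure of `E`). -/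
def reach {X : Type*} [MetricSpace X] (E : Set X) : ℝ≥0∞ :=
  ⨅ y ∈ closure E, reachAt E y

/-- The point of the Euclidean plane with coordinates `(a, b)`. -/
def pt (a b : ℝ) : EuclideanSpace ℝ (Fin 2) := (WithLp.equiv 2 (Fin 2 → ℝ)).symm ![a, b]

/-- The polar coordinate map `(x, r) ↦ (r cos x, r sin x)`, viewed as a self-map of the
Euclidean plane (first coordinate = angle, second coordinate = radius). -/
def polarMap (v : EuclideanSpace ℝ (Fin 2)) : EuclideanSpace ℝ (Fin 2) :=
  pt (v 1 * Real.cos (v 0)) (v 1 * Real.sin (v 0))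

/-- A set `Γ ⊆ ℝ²` is a C¹ curve if it is the image of an injective continuously
differentiable map `γ : [0,1] → ℝ²` with nonvanishing derivative. -/
def IsC1Curve (Γ : Set (EuclideanSpace ℝ (Fin 2))) : Prop :=
  ∃ γ : ℝ → EuclideanSpace ℝ (Fin 2),
    Set.InjOn γ (Set.Icc 0 1) ∧
    ContDiffOn ℝ 1 γ (Set.Icc 0 1) ∧
    (∀ t ∈ Set.Icc (0:ℝ) 1, derivWithin γ (Set.Icc 0 1) t ≠ 0) ∧
    Γ = γ '' Set.Icc 0 1

open Topology

/-!
If `J ∩ closedBall p δ` were the image `γ '' [0,1]` of an injective `C¹` map with nonvanishing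
derivative, its tangent cone at `p = γ t₀` would lie in the line `ℝ • γ' t₀`: on the compact
interval `γ` is a homeomorphism onto its image, so the difference quotients along any tangent
sequence converge to `γ' t₀`. On the other hand the polar curve `θ ↦ S θ • (cos θ, sin θ)`
passes through `p` with the one-sided velocities `dₗ • u + S x₀ • u⊥` and `dᵣ • u + S x₀ • u⊥`,
where `u = (cos x₀, sin x₀)`; both lie in the tangent cone, yet their determinant
`S x₀ * (dₗ - dᵣ)` is nonzero.
-/

theorem IsCompact.tendsto_nhds_of_injOn {α X Y : Type*} [TopologicalSpace X]
    [TopologicalSpace Y] [T2Space Y] {s : Set X} {f : X → Y} {l : Filter α} {u : α → X} {x : X}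
    (hs : IsCompact s) (hf : ContinuousOn f s) (hinj : InjOn f s) (hx : x ∈ s)
    (hu : ∀ᶠ n in l, u n ∈ s) (hfu : Tendsto (f ∘ u) l (𝓝 (f x))) :
    Tendsto u l (𝓝 x) := by
  refine hs.tendsto_nhds_of_unique_mapClusterPt hu fun y hy hcl => hinj hy hx ?_
  have hmap : map u l ≤ 𝓟 s := le_principal_iff.2 hu
  have hfy : MapClusterPt (f y) l (f ∘ u) :=
    hcl.tendsto_comp' ((hf y hy).mono_left (inf_le_inf_left _ hmap))
  exact eq_of_nhds_neBot (hfy.neBot.mono (inf_le_inf_left _ hfu))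

theorem mem_span_singleton_of_tendsto_smul {α E : Type*} [NormedAddCommGroup E]
    [NormedSpace ℝ E] {l : Filter α} [l.NeBot] {a : α → ℝ} {v : α → E} {T y : E} (hT : T ≠ 0)
    (hv : Tendsto v l (𝓝 T)) (hav : Tendsto (fun n => a n • v n) l (𝓝 y)) :
    y ∈ Submodule.span ℝ {T} := by
  obtain ⟨g, -, hgT⟩ := exists_dual_vector ℝ T (norm_ne_zero_iff.2 hT)
  have hgT0 : g T ≠ 0 := by simpa [hgT] using hT
  -- `g` recovers the scalars: eventually `a n = g (a n • v n) / g (v n)`.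
  have hgv : Tendsto (fun n => g (v n)) l (𝓝 (g T)) := (g.continuous.tendsto T).comp hv
  have ha : Tendsto a l (𝓝 (g y / g T)) := by
    refine (((g.continuous.tendsto y).comp hav).div hgv hgT0).congr' ?_
    filter_upwards [hgv.eventually_ne hgT0] with n hn
    simp [hn]
  rw [Submodule.mem_span_singleton]
  exact ⟨_, tendsto_nhds_unique (ha.smul hv) hav⟩

theorem tangentConeAt_image_subset_span {E : Type*} [NormedAddCommGroup E] [NormedSpace ℝ E]
    {γ : ℝ → E} {s : Set ℝ} {t₀ : ℝ} {T : E} (hs : IsCompact s) (hγ : ContinuousOn γ s)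
    (hinj : InjOn γ s) (ht₀ : t₀ ∈ s) (hder : HasDerivWithinAt γ T s t₀) (hT : T ≠ 0) :
    tangentConeAt ℝ (γ '' s) (γ t₀) ⊆ Submodule.span ℝ {T} := by
  intro y hy
  obtain ⟨α, l, hl, c, d, hd, hds, hcd⟩ := exists_fun_of_mem_tangentConeAt hy
  set t : α → ℝ := fun n => Function.invFunOn γ s (γ t₀ + d n)
  have hts : ∀ᶠ n in l, t n ∈ s := hds.mono fun n hn => Function.invFunOn_mem hn
  have hγt : ∀ᶠ n in l, γ (t n) = γ t₀ + d n := hds.mono fun n hn => Function.invFunOn_eq hn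
  have ht : Tendsto t l (𝓝[s] t₀) := by
    refine tendsto_nhdsWithin_iff.2 ⟨hs.tendsto_nhds_of_injOn hγ hinj ht₀ hts ?_, hts⟩
    refine Tendsto.congr' (hγt.mono fun n hn => hn.symm) ?_
    simpa using tendsto_const_nhds.add hd
  -- Patching the difference quotient with the value `T` at `t₀` makes it continuous there.
  set q := Function.update (slope γ t₀) t₀ T
  have hq : Tendsto (q ∘ t) l (𝓝 T) := by
    simpa [q] using (continuousWithinAt_update_same.2
      (hasDerivWithinAt_iff_tendsto_slope.1 hder)).tendsto.comp ht
  refine mem_span_singleton_of_tendsto_smul (a := fun n => c n * (t n - t₀)) hT hq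
    (hcd.congr' ?_)
  filter_upwards [hγt] with n hn
  have hqt : (t n - t₀) • q (t n) = γ (t n) - γ t₀ := by
    rcases eq_or_ne (t n) t₀ with h | h
    · simp [h]
    · simp [q, Function.update_of_ne h, sub_smul_slope]
  simp [mul_smul, hqt, hn]

theorem IsC1Curve.exists_tangentConeAt_subset_span {Γ : Set (EuclideanSpace ℝ (Fin 2))}
    (hΓ : IsC1Curve Γ) {p : EuclideanSpace ℝ (Fin 2)} (hp : p ∈ Γ) :
    ∃ T : EuclideanSpace ℝ (Fin 2), tangentConeAt ℝ Γ p ⊆ Submodule.span ℝ {T} := by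
  obtain ⟨γ, hinj, hC1, hγ', rfl⟩ := hΓ
  obtain ⟨t₀, ht₀, rfl⟩ := hp
  exact ⟨_, tangentConeAt_image_subset_span isCompact_Icc hC1.continuousOn hinj ht₀
    (hC1.differentiableOn one_ne_zero t₀ ht₀).hasDerivWithinAt (hγ' t₀ ht₀)⟩

theorem HasDerivWithinAt.mem_tangentConeAt {E : Type*} [NormedAddCommGroup E]
    [NormedSpace ℝ E] {f : ℝ → E} {w : E} {s : Set ℝ} {x : ℝ} {Γ : Set E}
    (hf : HasDerivWithinAt f w s x) (hx : AccPt x (𝓟 s)) (hΓ : ∀ᶠ y in 𝓝[s] x, f y ∈ Γ) :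
    w ∈ tangentConeAt ℝ Γ (f x) := by
  have hx' : AccPt x (𝓟 (s ∩ f ⁻¹' Γ)) := by
    rw [accPt_iff_frequently_nhdsNE] at hx ⊢
    have hΓ' : ∀ᶠ y in 𝓝[≠] x, y ∈ s → f y ∈ Γ :=
      nhdsWithin_le_nhds (eventually_nhdsWithin_iff.1 hΓ)
    exact (hx.and_eventually hΓ').mono fun y ⟨hys, hyΓ⟩ => ⟨hys, hyΓ hys⟩
  have hw := (hf.mono inter_subset_left).hasFDerivWithinAt.mapsTo_tangent_cone
    (tangentConeAt_eq_univ hx' ▸ mem_univ (1 : ℝ))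
  refine tangentConeAt_mono ?_ (by simpa using hw)
  rintro _ ⟨y, hy, rfl⟩
  exact hy.2

theorem pt_apply_zero (a b : ℝ) : pt a b 0 = a := by simp [pt]

theorem pt_apply_one (a b : ℝ) : pt a b 1 = b := by simp [pt]

theorem pt_eq_smul_add_smul (a b : ℝ) : pt a b = a • pt 1 0 + b • pt 0 1 := by
  ext i; fin_cases i <;> simp [pt]

theorem hasDerivWithinAt_pt {g h : ℝ → ℝ} {g' h' x : ℝ} {s : Set ℝ}
    (hg : HasDerivWithinAt g g' s x) (hh : HasDerivWithinAt h h' s x) :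
    HasDerivWithinAt (fun θ => pt (g θ) (h θ)) (pt g' h') s x := by
  rw [funext fun θ => pt_eq_smul_add_smul (g θ) (h θ), pt_eq_smul_add_smul g' h']
  exact (hg.smul_const _).add (hh.smul_const _)

theorem HasDerivWithinAt.polar {S : ℝ → ℝ} {d x : ℝ} {s : Set ℝ}
    (hS : HasDerivWithinAt S d s x) :
    HasDerivWithinAt (fun θ => pt (S θ * Real.cos θ) (S θ * Real.sin θ))
      (pt (d * Real.cos x - S x * Real.sin x) (d * Real.sin x + S x * Real.cos x)) s x := by
  convert hasDerivWithinAt_pt (hS.mul (Real.hasDerivAt_cos x).hasDerivWithinAt)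
    (hS.mul (Real.hasDerivAt_sin x).hasDerivWithinAt) using 2
  · rfl
  · ring

theorem cross_eq_zero_of_mem_span_singleton {T v w : EuclideanSpace ℝ (Fin 2)}
    (hv : v ∈ Submodule.span ℝ {T}) (hw : w ∈ Submodule.span ℝ {T}) :
    v 0 * w 1 - v 1 * w 0 = 0 := by
  obtain ⟨a, rfl⟩ := Submodule.mem_span_singleton.1 hv
  obtain ⟨b, rfl⟩ := Submodule.mem_span_singleton.1 hw
  simp only [PiLp.smul_apply, smul_eq_mul]
  ring

theorem wedge_point_not_locally_C1_general
    (S : ℝ → ℝ)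
    (hpos : ∀ x ∈ Set.Icc 0 (2 * Real.pi), 0 < S x)
    (x₀ : ℝ) (hx₀ : x₀ ∈ Set.Ioo 0 (2 * Real.pi))
    (dl dr : ℝ)
    (hdl : HasDerivWithinAt S dl (Set.Iic x₀) x₀)
    (hdr : HasDerivWithinAt S dr (Set.Ici x₀) x₀)
    (hne : dl ≠ dr) :
    ∀ δ > (0:ℝ),
      ¬ IsC1Curve
        (((fun θ : ℝ => pt (S θ * Real.cos θ) (S θ * Real.sin θ)) ''
            Set.Icc 0 (2 * Real.pi)) ∩
          Metric.closedBall (pt (S x₀ * Real.cos x₀) (S x₀ * Real.sin x₀)) δ) := by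
  intro δ hδ hcurve
  set f := fun θ : ℝ => pt (S θ * Real.cos θ) (S θ * Real.sin θ)
  have hx₀Icc : x₀ ∈ Icc 0 (2 * Real.pi) := Ioo_subset_Icc_self hx₀
  obtain ⟨T, hT⟩ := IsC1Curve.exists_tangentConeAt_subset_span hcurve
    ⟨mem_image_of_mem f hx₀Icc, mem_closedBall_self hδ.le⟩
  have hnear : ∀ s, ContinuousWithinAt f s x₀ →
      ∀ᶠ θ in 𝓝[s] x₀, f θ ∈ f '' Icc 0 (2 * Real.pi) ∩ closedBall (f x₀) δ := fun s hs =>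
    (Eventually.and (mem_nhdsWithin_of_mem_nhds (Icc_mem_nhds hx₀.1 hx₀.2))
      (hs.eventually (closedBall_mem_nhds _ hδ))).mono fun θ h => ⟨mem_image_of_mem f h.1, h.2⟩
  have hl := hT (hdl.polar.mem_tangentConeAt (uniqueDiffWithinAt_Iic x₀).accPt
    (hnear _ hdl.polar.continuousWithinAt))
  have hr := hT (hdr.polar.mem_tangentConeAt (uniqueDiffWithinAt_Ici x₀).accPt
    (hnear _ hdr.polar.continuousWithinAt))
  have hcross := cross_eq_zero_of_mem_span_singleton hl hr
  simp only [pt_apply_zero, pt_apply_one] at hcross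
  have hS : S x₀ * (dl - dr) = 0 := by
    linear_combination hcross - S x₀ * (dl - dr) * Real.sin_sq_add_cos_sq x₀
  exact hne (sub_eq_zero.1 ((mul_eq_zero.1 hS).resolve_left (hpos x₀ hx₀Icc).ne'))

/-- **A wedge point destroys local C¹ smoothness.**
If `S : [0, 2π] → ℝ` is continuous and positive, and at `x₀ ∈ (0, 2π)` the left and right
derivatives of `S` exist but differ, then near the corresponding point
`p = S x₀ · (cos x₀, sin x₀)` of the polar graph `J`, no neighbourhood piece
`J ∩ closedBall p δ` is a C¹ curve. -/
theorem wedge_point_not_locally_C1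
    (S : ℝ → ℝ)
    (hcont : ContinuousOn S (Set.Icc 0 (2 * Real.pi)))
    (hpos : ∀ x ∈ Set.Icc 0 (2 * Real.pi), 0 < S x)
    (x₀ : ℝ) (hx₀ : x₀ ∈ Set.Ioo 0 (2 * Real.pi))
    (dl dr : ℝ)
    (hdl : HasDerivWithinAt S dl (Set.Iic x₀) x₀)
    (hdr : HasDerivWithinAt S dr (Set.Ici x₀) x₀)
    (hne : dl ≠ dr) :
    ∀ δ > (0:ℝ),
      ¬ IsC1Curve
        (((fun θ : ℝ => pt (S θ * Real.cos θ) (S θ * Real.sin θ)) ''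
            Set.Icc 0 (2 * Real.pi)) ∩
          Metric.closedBall (pt (S x₀ * Real.cos x₀) (S x₀ * Real.sin x₀)) δ) :=
  wedge_point_not_locally_C1_general S hpos x₀ hx₀ dl dr hdl hdr hne
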